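/- There exists a universal constant c > 0 with the following property. Let X ⊆ ℝⁿ and Y ⊆ ℝᵐ be nonempty convex compact sets, κ = max{max_{x∈X}‖x‖₂, max_{y∈Y}‖y‖₂} > 0, C_X = cone({κ}×X) ⊆ ℝ^{n+1}, C_Y = cone({κ}×Y) ⊆ ℝ^{m+1}, and let F : X×Y → ℝ be convex in its first argument and concave in its second. Let p ∈ ℕ, ω_t = t^p, T ≥ 1, and let x_t ∈ X, y_t ∈ Y, f_t ∈ ℝⁿ, g_t ∈ ℝᵐ (t = 1,…,T) satisfy: f_t is a subgradient of F(·, y_t) at x_t with ‖f_t‖₂ ≤ L, g_t is a supergradient of F(x_t, ·) at y_t with ‖g_t‖₂ ≤ L; with u_0^x = 0 and u_t^x = ∑_{τ=1}^t ω_τ (⟨f_τ, x_τ⟩/κ, −f_τ), for every t there exists α_t ≥ 0 with π_{C_X}(u_{t−1}^x) = α_t·(κ, x_t); and with u_0^y = 0 and u_t^y = ∑_{τ=1}^t ω_τ (−⟨g_τ, y_τ⟩/κ, g_τ), for every t there exists α'_t ≥ 0 with π_{C_Y}(u_{t−1}^y) = α'_t·(κ, y_t). Set (x̄_T, ȳ_T)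 = ∑_{t=1}^T ω_t (x_t, y_t) / ∑_{t=1}^T ω_t. Then sup_{y∈Y} F(x̄_T, y) − inf_{x∈X} F(x, ȳ_T) ≤ c · κ L √(p+1) / √T. -/

import Mathlib

/-!
Lift a decision `x ∈ X` to `(κ, x)` and a loss vector `f` played against `x` to
`(⟪f, x⟫ / κ, -f)`; the lifted loss is orthogonal to the lifted decision, and its pairing with
`(κ, z)` is the instantaneous regret `⟪f, x - z⟫`. CBA plays the direction of the projection of the
accumulated lifted losses onto the cone `C = cone({κ} × X)`, so each new (weighted) lifted loss is
orthogonal to that projection. By Pythagoras the squared norm of the projection then grows by at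
most `ω_t² ‖(⟪f_t, x_t⟫ / κ, -f_t)‖² ≤ 2 ω_t² L²` per round, and since `u - π_C u` is polar to `C`,
the regret against any `z ∈ X` is at most `‖(κ, z)‖ · √(2 L² ∑ ω_t²) ≤ 2 κ L √(∑ ω_t²)`.

For a convex-concave `F`, the duality gap of the weighted averages is at most the sum of the two
players' weighted regrets divided by `∑ ω_t`. With `ω_t = t^p`, the bound
`T ∑ t^{2p} ≤ T^{p+1} ∑ t^p ≤ (p + 1) (∑ t^p)²` turns this into `4 κ L √(p + 1) / √T`.
-/

set_option autoImplicit false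

open scoped RealInnerProductSpace
open Finset

noncomputable section

/-- The lifted vector `(t, y) ∈ ℝ × ℝⁿ = ℝ^{n+1}`. -/
def pr {n : ℕ} (t : ℝ) (y : EuclideanSpace ℝ (Fin n)) :
    EuclideanSpace ℝ (Fin (n + 1)) :=
  WithLp.toLp 2 (Fin.cons t (fun i => y i) : Fin (n + 1) → ℝ)

/-- The conic hull `cone({κ} × X) = {α • (κ, x) : α ≥ 0, x ∈ X}`. -/
def coneLift {n : ℕ} (κ : ℝ) (X : Set (EuclideanSpace ℝ (Fin n))) :
    Set (EuclideanSpace ℝ (Fin (n + 1))) :=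
  {u | ∃ α : ℝ, 0 ≤ α ∧ ∃ x ∈ X, u = α • pr κ x}

/-- `p` is the Euclidean orthogonal projection of `u` onto the set `S`. -/
def IsProjOn {E : Type*} [NormedAddCommGroup E] [InnerProductSpace ℝ E]
    (u : E) (S : Set E) (p : E) : Prop :=
  p ∈ S ∧ ∀ z ∈ S, dist u p ≤ dist u z

section Lift

variable {n : ℕ}

lemma smul_pr (α t : ℝ) (y : EuclideanSpace ℝ (Fin n)) :
    α • pr t y = pr (α * t) (α • y) := by
  ext i
  induction i using Fin.cases <;> simp [pr]

lemma pr_add_pr (a b : ℝ) (u v : EuclideanSpace ℝ (Fin n)) :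
    pr a u + pr b v = pr (a + b) (u + v) := by
  ext i
  induction i using Fin.cases <;> simp [pr]

lemma inner_pr_pr (a b : ℝ) (u v : EuclideanSpace ℝ (Fin n)) :
    ⟪pr a u, pr b v⟫ = a * b + ⟪u, v⟫ := by
  simp [PiLp.inner_apply, Fin.sum_univ_succ, pr, mul_comm]

lemma norm_pr_sq (a : ℝ) (u : EuclideanSpace ℝ (Fin n)) :
    ‖pr a u‖ ^ 2 = a ^ 2 + ‖u‖ ^ 2 := by
  rw [← real_inner_self_eq_norm_sq, ← real_inner_self_eq_norm_sq, inner_pr_pr, sq]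

variable {κ : ℝ} {X : Set (EuclideanSpace ℝ (Fin n))}

lemma pr_mem_coneLift {x : EuclideanSpace ℝ (Fin n)} (hx : x ∈ X) : pr κ x ∈ coneLift κ X :=
  ⟨1, zero_le_one, x, hx, (one_smul _ _).symm⟩

lemma smul_mem_coneLift {c : ℝ} (hc : 0 ≤ c) {u : EuclideanSpace ℝ (Fin (n + 1))}
    (hu : u ∈ coneLift κ X) : c • u ∈ coneLift κ X := by
  obtain ⟨α, hα, x, hx, rfl⟩ := hu
  exact ⟨c * α, mul_nonneg hc hα, x, hx, smul_smul c α _⟩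

lemma convex_coneLift (hX : Convex ℝ X) : Convex ℝ (coneLift κ X) := by
  rintro _ ⟨α, hα, x, hx, rfl⟩ _ ⟨β, hβ, x', hx', rfl⟩ a b ha hb -
  rcases (by positivity : (0 : ℝ) ≤ a * α + b * β).eq_or_lt with hγ | hγ
  · have hα' : a * α = 0 := by nlinarith [mul_nonneg ha hα, mul_nonneg hb hβ]
    have hβ' : b * β = 0 := by nlinarith [mul_nonneg ha hα, mul_nonneg hb hβ]
    refine ⟨0, le_rfl, x, hx, ?_⟩
    rw [smul_smul, smul_smul, hα', hβ', zero_smul, zero_smul, add_zero]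
  -- renormalise the two weights `a α, b β` into a convex combination of `x, x'`
  · refine ⟨a * α + b * β, hγ.le, ((a * α) / (a * α + b * β)) • x
      + ((b * β) / (a * α + b * β)) • x', hX hx hx' (by positivity) (by positivity)
      (by field_simp), ?_⟩
    simp only [smul_pr, pr_add_pr, smul_add, smul_smul]
    congr 1 <;> [ring; (congr 2 <;> field_simp)]

end Lift

namespace IsProjOn

variable {E : Type*} [NormedAddCommGroup E] [InnerProductSpace ℝ E] {S : Set E} {u q : E}

lemma inner_sub_sub_nonpos (hS : Convex ℝ S) (h : IsProjOn u S q) :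
    ∀ z ∈ S, ⟪u - q, z - q⟫ ≤ 0 := by
  have : Nonempty S := ⟨⟨q, h.1⟩⟩
  rw [← norm_eq_iInf_iff_real_inner_le_zero hS h.1]
  refine le_antisymm (le_ciInf fun z => ?_)
    (ciInf_le (f := fun w : S => ‖u - (w : E)‖) ⟨0, ?_⟩ ⟨q, h.1⟩)
  · simpa [dist_eq_norm] using h.2 z z.2
  · rintro _ ⟨z, rfl⟩
    exact norm_nonneg _

/-- Testing the variational inequality against `0` and `2 q` forces `u - q ⊥ q`. -/
lemma inner_sub_self_eq_zero (hS : Convex ℝ S)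
    (hcone : ∀ c : ℝ, 0 ≤ c → ∀ w ∈ S, c • w ∈ S) (h : IsProjOn u S q) : ⟪u - q, q⟫ = 0 := by
  have h0 := h.inner_sub_sub_nonpos hS 0 (by simpa using hcone 0 le_rfl q h.1)
  have h2 := h.inner_sub_sub_nonpos hS ((2 : ℝ) • q) (hcone 2 zero_le_two q h.1)
  rw [zero_sub, inner_neg_right] at h0
  rw [two_smul, add_sub_cancel_right] at h2
  linarith

lemma norm_sq_eq_inner (hS : Convex ℝ S)
    (hcone : ∀ c : ℝ, 0 ≤ c → ∀ w ∈ S, c • w ∈ S) (h : IsProjOn u S q) : ‖q‖ ^ 2 = ⟪u, q⟫ := by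
  have := h.inner_sub_self_eq_zero hS hcone
  rw [inner_sub_left, real_inner_self_eq_norm_sq] at this
  linarith

lemma inner_le_inner (hS : Convex ℝ S)
    (hcone : ∀ c : ℝ, 0 ≤ c → ∀ w ∈ S, c • w ∈ S) (h : IsProjOn u S q) :
    ∀ z ∈ S, ⟪u, z⟫ ≤ ⟪q, z⟫ := by
  intro z hz
  have := h.inner_sub_sub_nonpos hS z hz
  rw [inner_sub_right, h.inner_sub_self_eq_zero hS hcone, inner_sub_left] at this
  linarith

lemma norm_le_of_inner_le (hS : Convex ℝ S)
    (hcone : ∀ c : ℝ, 0 ≤ c → ∀ w ∈ S, c • w ∈ S) {r : ℝ} (hr : 0 ≤ r) (h : IsProjOn u S q)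
    (hu : ∀ z ∈ S, ⟪u, z⟫ ≤ ‖z‖ * r) : ‖q‖ ≤ r := by
  have : ‖q‖ * ‖q‖ ≤ ‖q‖ * r := by
    rw [← sq, h.norm_sq_eq_inner hS hcone]
    exact hu q h.1
  rcases (norm_nonneg q).eq_or_lt with hq | hq
  · rw [← hq]; exact hr
  · exact le_of_mul_le_mul_left this hq

end IsProjOn

theorem inner_sum_le_of_isProjOn_orthogonal {E : Type*} [NormedAddCommGroup E]
    [InnerProductSpace ℝ E] {S : Set E} (hS : Convex ℝ S)
    (hcone : ∀ c : ℝ, 0 ≤ c → ∀ w ∈ S, c • w ∈ S) {v : ℕ → E} {T : ℕ}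
    (hproj : ∀ t ∈ Icc 1 T, ∃ q, IsProjOn (∑ τ ∈ Icc 1 (t - 1), v τ) S q ∧ ⟪v t, q⟫ = 0) :
    ∀ z ∈ S, ⟪∑ t ∈ Icc 1 T, v t, z⟫ ≤ ‖z‖ * √(∑ t ∈ Icc 1 T, ‖v t‖ ^ 2) := by
  suffices ∀ t ≤ T, ∀ z ∈ S, ⟪∑ τ ∈ Icc 1 t, v τ, z⟫ ≤ ‖z‖ * √(∑ τ ∈ Icc 1 t, ‖v τ‖ ^ 2) from
    this T le_rfl
  intro t
  induction t with
  | zero => simp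
  | succ t ih =>
    intro ht z hz
    obtain ⟨q, hq, horth⟩ := hproj (t + 1) (by simp [ht])
    rw [add_tsub_cancel_right] at hq
    have hqB : ‖q‖ ≤ √(∑ τ ∈ Icc 1 t, ‖v τ‖ ^ 2) :=
      hq.norm_le_of_inner_le hS hcone (Real.sqrt_nonneg _) (ih (by omega))
    have hpyth : ‖q + v (t + 1)‖ ^ 2 = ‖q‖ ^ 2 + ‖v (t + 1)‖ ^ 2 := by
      rw [norm_add_sq_real, real_inner_comm, horth]
      ring
    have hstep : ‖q + v (t + 1)‖ ≤ √(∑ τ ∈ Icc 1 (t + 1), ‖v τ‖ ^ 2) := by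
      rw [sum_Icc_succ_top (by omega), Real.le_sqrt (norm_nonneg _) (by positivity), hpyth]
      gcongr
      exact (Real.le_sqrt (norm_nonneg _) (by positivity)).mp hqB
    calc ⟪∑ τ ∈ Icc 1 (t + 1), v τ, z⟫
        = ⟪∑ τ ∈ Icc 1 t, v τ, z⟫ + ⟪v (t + 1), z⟫ := by
          rw [sum_Icc_succ_top (by omega), inner_add_left]
      _ ≤ ⟪q + v (t + 1), z⟫ := by
          rw [inner_add_left]
          gcongr
          exact hq.inner_le_inner hS hcone z hz
      _ ≤ ‖z‖ * √(∑ τ ∈ Icc 1 (t + 1), ‖v τ‖ ^ 2) := by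
          rw [mul_comm]
          exact (real_inner_le_norm _ _).trans (by gcongr)

section Regret

variable {n : ℕ} {κ L : ℝ} {X : Set (EuclideanSpace ℝ (Fin n))} {ω : ℕ → ℝ} {T : ℕ}
  {x f : ℕ → EuclideanSpace ℝ (Fin n)}

theorem cba_regret_le (hκ : 0 < κ) (hL : 0 ≤ L) (hXconv : Convex ℝ X)
    (hXκ : ∀ z ∈ X, ‖z‖ ≤ κ) (hx : ∀ t ∈ Icc 1 T, x t ∈ X) (hf : ∀ t ∈ Icc 1 T, ‖f t‖ ≤ L)
    (hproj : ∀ t ∈ Icc 1 T, ∃ α : ℝ, 0 ≤ α ∧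
      IsProjOn (∑ τ ∈ Icc 1 (t - 1), ω τ • pr (⟪f τ, x τ⟫ / κ) (-(f τ)))
        (coneLift κ X) (α • pr κ (x t))) :
    ∀ z ∈ X, ∑ t ∈ Icc 1 T, ω t * ⟪f t, x t - z⟫ ≤ 2 * κ * L * √(∑ t ∈ Icc 1 T, ω t ^ 2) := by
  intro z hz
  have hlift : ∀ t (w : EuclideanSpace ℝ (Fin n)),
      ⟪pr (⟪f t, x t⟫ / κ) (-(f t)), pr κ w⟫ = ⟪f t, x t - w⟫ := by
    intro t w
    rw [inner_pr_pr, div_mul_cancel₀ _ hκ.ne', inner_neg_left, inner_sub_right]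
    ring
  have hblackwell := inner_sum_le_of_isProjOn_orthogonal (convex_coneLift hXconv)
    (fun c hc _ hw => smul_mem_coneLift hc hw)
    (v := fun t => ω t • pr (⟪f t, x t⟫ / κ) (-(f t))) (T := T) (by
      intro t ht
      obtain ⟨α, -, hα⟩ := hproj t ht
      refine ⟨_, hα, ?_⟩
      rw [real_inner_smul_left, real_inner_smul_right, hlift, sub_self, inner_zero_right,
        mul_zero, mul_zero]) (pr κ z) (pr_mem_coneLift hz)
  have hpayoff : ∀ t ∈ Icc 1 T, ‖ω t • pr (⟪f t, x t⟫ / κ) (-(f t))‖ ^ 2 ≤ 2 * L ^ 2 * ω t ^ 2 := by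
    intro t ht
    have hfx : |⟪f t, x t⟫ / κ| ≤ L := by
      rw [abs_div, abs_of_pos hκ, div_le_iff₀ hκ]
      exact (abs_real_inner_le_norm _ _).trans
        (mul_le_mul (hf t ht) (hXκ _ (hx t ht)) (norm_nonneg _) hL)
    rw [norm_smul, mul_pow, norm_pr_sq, norm_neg, Real.norm_eq_abs, sq_abs]
    calc ω t ^ 2 * ((⟪f t, x t⟫ / κ) ^ 2 + ‖f t‖ ^ 2) ≤ ω t ^ 2 * (L ^ 2 + L ^ 2) := by
          gcongr ?_ * (?_ + ?_)
          · exact sq_le_sq' (abs_le.mp hfx).1 (abs_le.mp hfx).2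
          · exact pow_le_pow_left₀ (norm_nonneg _) (hf t ht) 2
      _ = 2 * L ^ 2 * ω t ^ 2 := by ring
  have hdecision : ‖pr κ z‖ ^ 2 ≤ 2 * κ ^ 2 := by
    rw [norm_pr_sq]
    nlinarith [hXκ z hz, norm_nonneg z]
  calc ∑ t ∈ Icc 1 T, ω t * ⟪f t, x t - z⟫
      = ⟪∑ t ∈ Icc 1 T, ω t • pr (⟪f t, x t⟫ / κ) (-(f t)), pr κ z⟫ := by
        simp only [sum_inner, real_inner_smul_left, hlift]
    _ ≤ ‖pr κ z‖ * √(∑ t ∈ Icc 1 T, ‖ω t • pr (⟪f t, x t⟫ / κ) (-(f t))‖ ^ 2) := hblackwell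
    _ = √(‖pr κ z‖ ^ 2 * ∑ t ∈ Icc 1 T, ‖ω t • pr (⟪f t, x t⟫ / κ) (-(f t))‖ ^ 2) := by
        rw [Real.sqrt_mul (sq_nonneg _), Real.sqrt_sq (norm_nonneg _)]
    _ ≤ √((2 * κ ^ 2) * (2 * L ^ 2 * ∑ t ∈ Icc 1 T, ω t ^ 2)) := by
        gcongr
        rw [mul_sum]
        exact sum_le_sum hpayoff
    _ = 2 * κ * L * √(∑ t ∈ Icc 1 T, ω t ^ 2) := by
        rw [show (2 * κ ^ 2) * (2 * L ^ 2 * ∑ t ∈ Icc 1 T, ω t ^ 2)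
            = (2 * κ * L) ^ 2 * ∑ t ∈ Icc 1 T, ω t ^ 2 by ring,
          Real.sqrt_mul (sq_nonneg _), Real.sqrt_sq (by positivity)]

end Regret

theorem cba_regret_le_of_gain {m : ℕ} {κ L : ℝ} {Y : Set (EuclideanSpace ℝ (Fin m))}
    {ω : ℕ → ℝ} {T : ℕ} {y g : ℕ → EuclideanSpace ℝ (Fin m)} (hκ : 0 < κ) (hL : 0 ≤ L)
    (hYconv : Convex ℝ Y) (hYκ : ∀ z ∈ Y, ‖z‖ ≤ κ) (hy : ∀ t ∈ Icc 1 T, y t ∈ Y)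
    (hg : ∀ t ∈ Icc 1 T, ‖g t‖ ≤ L)
    (hproj : ∀ t ∈ Icc 1 T, ∃ α : ℝ, 0 ≤ α ∧
      IsProjOn (∑ τ ∈ Icc 1 (t - 1), ω τ • pr (-⟪g τ, y τ⟫ / κ) (g τ))
        (coneLift κ Y) (α • pr κ (y t))) :
    ∀ z ∈ Y, ∑ t ∈ Icc 1 T, ω t * ⟪g t, z - y t⟫ ≤ 2 * κ * L * √(∑ t ∈ Icc 1 T, ω t ^ 2) := by
  have := cba_regret_le (f := fun t => -g t) hκ hL hYconv hYκ hy (by simpa using hg)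
    (by simpa [inner_neg_left, neg_div] using hproj)
  simpa [inner_neg_left, ← inner_neg_right] using this

section Gap

variable {ι E₁ E₂ : Type*} [NormedAddCommGroup E₁] [InnerProductSpace ℝ E₁]
  [NormedAddCommGroup E₂] [InnerProductSpace ℝ E₂]

theorem gap_weightedAverage_le {X : Set E₁} {Y : Set E₂} {F : E₁ → E₂ → ℝ}
    (hFconv : ∀ y ∈ Y, ConvexOn ℝ X (fun x => F x y))
    (hFconc : ∀ x ∈ X, ConcaveOn ℝ Y (fun y => F x y))
    {s : Finset ι} {w : ι → ℝ} (hw : ∀ i ∈ s, 0 ≤ w i) (hW : 0 < ∑ i ∈ s, w i)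
    {x : ι → E₁} {y : ι → E₂} {f : ι → E₁} {g : ι → E₂}
    (hx : ∀ i ∈ s, x i ∈ X) (hy : ∀ i ∈ s, y i ∈ Y)
    (hf : ∀ i ∈ s, ∀ x' ∈ X, F (x i) (y i) + ⟪f i, x' - x i⟫ ≤ F x' (y i))
    (hg : ∀ i ∈ s, ∀ y' ∈ Y, F (x i) y' ≤ F (x i) (y i) + ⟪g i, y' - y i⟫)
    {x' : E₁} (hx' : x' ∈ X) {y' : E₂} (hy' : y' ∈ Y) :
    F ((∑ i ∈ s, w i)⁻¹ • ∑ i ∈ s, w i • x i) y' - F x' ((∑ i ∈ s, w i)⁻¹ • ∑ i ∈ s, w i • y i)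
      ≤ (∑ i ∈ s, w i)⁻¹ *
          (∑ i ∈ s, w i * ⟪f i, x i - x'⟫ + ∑ i ∈ s, w i * ⟪g i, y' - y i⟫) := by
  set W := ∑ i ∈ s, w i
  have hw' : ∀ i ∈ s, 0 ≤ W⁻¹ * w i := fun i hi => mul_nonneg (inv_nonneg.mpr hW.le) (hw i hi)
  have hw'_sum : ∑ i ∈ s, W⁻¹ * w i = 1 := by rw [← mul_sum, inv_mul_cancel₀ hW.ne']
  have hupper : F (W⁻¹ • ∑ i ∈ s, w i • x i) y'
      ≤ ∑ i ∈ s, (W⁻¹ * w i) * (F (x i) (y i) + ⟪g i, y' - y i⟫) := by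
    simp only [smul_sum, smul_smul]
    refine ((hFconv y' hy').map_sum_le hw' hw'_sum hx).trans (sum_le_sum fun i hi => ?_)
    exact mul_le_mul_of_nonneg_left (hg i hi y' hy') (hw' i hi)
  have hlower : ∑ i ∈ s, (W⁻¹ * w i) * (F (x i) (y i) + ⟪f i, x' - x i⟫)
      ≤ F x' (W⁻¹ • ∑ i ∈ s, w i • y i) := by
    simp only [smul_sum, smul_smul]
    refine (sum_le_sum fun i hi => ?_).trans ((hFconc x' hx').le_map_sum hw' hw'_sum hy)
    exact mul_le_mul_of_nonneg_left (hf i hi x' hx') (hw' i hi)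
  have hsplit : ∑ i ∈ s, (W⁻¹ * w i) * (F (x i) (y i) + ⟪g i, y' - y i⟫)
      - ∑ i ∈ s, (W⁻¹ * w i) * (F (x i) (y i) + ⟪f i, x' - x i⟫)
      = W⁻¹ * (∑ i ∈ s, w i * ⟪f i, x i - x'⟫ + ∑ i ∈ s, w i * ⟪g i, y' - y i⟫) := by
    simp only [← sum_sub_distrib, ← sum_add_distrib, mul_sum, inner_sub_right]
    exact sum_congr rfl fun i _ => by ring
  linarith

end Gap

lemma ciSup_sub_ciInf_le {α β : Type*} [Nonempty α] [Nonempty β] {φ : α → ℝ} {ψ : β → ℝ}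
    {B : ℝ} (h : ∀ a b, φ a - ψ b ≤ B) : (⨆ a, φ a) - (⨅ b, ψ b) ≤ B := by
  rw [sub_le_iff_le_add]
  refine ciSup_le fun a => ?_
  rw [← sub_le_iff_le_add']
  exact le_ciInf fun b => by linarith [h a b]

section PowerSums

lemma sum_pow_pos (p : ℕ) {T : ℕ} (hT : 1 ≤ T) : 0 < ∑ t ∈ Icc 1 T, (t : ℝ) ^ p :=
  sum_pos (fun t ht => by have := (mem_Icc.mp ht).1; positivity) ⟨1, by simp [hT]⟩

lemma pow_succ_le_mul_sum_pow (p T : ℕ) :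
    (T : ℝ) ^ (p + 1) ≤ (p + 1) * ∑ t ∈ Icc 1 T, (t : ℝ) ^ p := by
  induction T with
  | zero => simp
  | succ T ih =>
    have hstep : ((T : ℝ) + 1) ^ (p + 1) - (T : ℝ) ^ (p + 1) ≤ (p + 1) * ((T : ℝ) + 1) ^ p := by
      refine (le_abs_self _).trans ((abs_pow_sub_pow_le _ _ _).trans_eq ?_)
      rw [add_sub_cancel_left, abs_one, one_mul, Nat.add_sub_cancel, abs_of_nonneg (by positivity),
        abs_of_nonneg (by positivity), max_eq_left (by linarith)]
      push_cast
      ring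
    rw [sum_Icc_succ_top (by omega), mul_add]
    push_cast
    linarith

lemma sum_pow_sq_mul_le (p T : ℕ) :
    (∑ t ∈ Icc 1 T, ((t : ℝ) ^ p) ^ 2) * T ≤ (p + 1) * (∑ t ∈ Icc 1 T, (t : ℝ) ^ p) ^ 2 := by
  have hsq : ∑ t ∈ Icc 1 T, ((t : ℝ) ^ p) ^ 2 ≤ (T : ℝ) ^ p * ∑ t ∈ Icc 1 T, (t : ℝ) ^ p := by
    rw [mul_sum]
    refine sum_le_sum fun t ht => ?_
    rw [sq]
    gcongr
    exact_mod_cast (mem_Icc.mp ht).2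
  calc (∑ t ∈ Icc 1 T, ((t : ℝ) ^ p) ^ 2) * T
      ≤ (T : ℝ) ^ p * (∑ t ∈ Icc 1 T, (t : ℝ) ^ p) * T := by gcongr
    _ = (T : ℝ) ^ (p + 1) * ∑ t ∈ Icc 1 T, (t : ℝ) ^ p := by ring
    _ ≤ (p + 1) * (∑ t ∈ Icc 1 T, (t : ℝ) ^ p) * ∑ t ∈ Icc 1 T, (t : ℝ) ^ p := by
        gcongr
        exact pow_succ_le_mul_sum_pow p T
    _ = (p + 1) * (∑ t ∈ Icc 1 T, (t : ℝ) ^ p) ^ 2 := by ring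

lemma inv_sum_pow_mul_sqrt_sum_pow_sq_le (p : ℕ) {T : ℕ} (hT : 1 ≤ T) :
    (∑ t ∈ Icc 1 T, (t : ℝ) ^ p)⁻¹ * √(∑ t ∈ Icc 1 T, ((t : ℝ) ^ p) ^ 2)
      ≤ √((p : ℝ) + 1) / √(T : ℝ) := by
  have hT' : (0 : ℝ) < T := by exact_mod_cast hT
  have hΩ := sum_pow_pos p hT
  rw [inv_mul_eq_div, div_le_div_iff₀ hΩ (Real.sqrt_pos.mpr hT'), ← Real.sqrt_mul (by positivity),
    ← Real.sqrt_sq hΩ.le, ← Real.sqrt_mul (by positivity)]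
  exact Real.sqrt_le_sqrt (sum_pow_sq_mul_le p T)

end PowerSums

/-- Theorem 4, part 1: in the repeated game framework where both
players use CBA with polynomial weights `ω_t = t^p`, the weighted average
iterates have duality gap at most `c · κ L √(p+1) / √T` for a universal `c`. -/
theorem stmt9 :
    ∃ c : ℝ, 0 < c ∧
      ∀ (n m : ℕ)
        (X : Set (EuclideanSpace ℝ (Fin n))) (Y : Set (EuclideanSpace ℝ (Fin m))),
        X.Nonempty → Convex ℝ X → IsCompact X →
        Y.Nonempty → Convex ℝ Y → IsCompact Y →
        ∀ κ : ℝ, IsGreatest (((fun x => ‖x‖) '' X) ∪ ((fun y => ‖y‖) '' Y)) κ → 0 < κ →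
        ∀ F : EuclideanSpace ℝ (Fin n) → EuclideanSpace ℝ (Fin m) → ℝ,
        (∀ y ∈ Y, ConvexOn ℝ X (fun x => F x y)) →
        (∀ x ∈ X, ConcaveOn ℝ Y (fun y => F x y)) →
        ∀ (p : ℕ) (T : ℕ), 1 ≤ T →
        ∀ L : ℝ,
        ∀ (x : ℕ → EuclideanSpace ℝ (Fin n)) (y : ℕ → EuclideanSpace ℝ (Fin m))
          (f : ℕ → EuclideanSpace ℝ (Fin n)) (g : ℕ → EuclideanSpace ℝ (Fin m)),
        (∀ t ∈ Icc 1 T, x t ∈ X) → (∀ t ∈ Icc 1 T, y t ∈ Y) →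
        -- `f t` is a subgradient of `F(·, y t)` at `x t`, with `‖f t‖₂ ≤ L`
        (∀ t ∈ Icc 1 T,
          (∀ x' ∈ X, F (x t) (y t) + ⟪f t, x' - x t⟫ ≤ F x' (y t)) ∧ ‖f t‖ ≤ L) →
        -- `g t` is a supergradient of `F(x t, ·)` at `y t`, with `‖g t‖₂ ≤ L`
        (∀ t ∈ Icc 1 T,
          (∀ y' ∈ Y, F (x t) y' ≤ F (x t) (y t) + ⟪g t, y' - y t⟫) ∧ ‖g t‖ ≤ L) →
        -- CBA choice rule for the first player, with
        -- `u_t^x = ∑_{τ=1}^t τ^p • (⟨f_τ, x_τ⟩/κ, −f_τ)`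
        (∀ t ∈ Icc 1 T, ∃ α : ℝ, 0 ≤ α ∧
          IsProjOn (∑ τ ∈ Icc 1 (t - 1), ((τ : ℝ) ^ p) • pr (⟪f τ, x τ⟫ / κ) (-(f τ)))
            (coneLift κ X) (α • pr κ (x t))) →
        -- CBA choice rule for the second player, with
        -- `u_t^y = ∑_{τ=1}^t τ^p • (−⟨g_τ, y_τ⟩/κ, g_τ)`
        (∀ t ∈ Icc 1 T, ∃ α : ℝ, 0 ≤ α ∧
          IsProjOn (∑ τ ∈ Icc 1 (t - 1), ((τ : ℝ) ^ p) • pr (-⟪g τ, y τ⟫ / κ) (g τ))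
            (coneLift κ Y) (α • pr κ (y t))) →
        (⨆ yy : Y,
            F ((∑ t ∈ Icc 1 T, ((t : ℝ) ^ p))⁻¹ • ∑ t ∈ Icc 1 T, ((t : ℝ) ^ p) • x t) yy)
          - (⨅ xx : X,
              F xx ((∑ t ∈ Icc 1 T, ((t : ℝ) ^ p))⁻¹ • ∑ t ∈ Icc 1 T, ((t : ℝ) ^ p) • y t))
        ≤ c * κ * L * Real.sqrt ((p : ℝ) + 1) / Real.sqrt (T : ℝ) := by
  refine ⟨4, by norm_num, ?_⟩
  intro n m X Y hXne hXconv _ hYne hYconv _ κ hκ hκpos F hFconv hFconc p T hT L x y f g hx hy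
    hf hg hprojx hprojy
  have hXκ : ∀ z ∈ X, ‖z‖ ≤ κ := fun z hz => hκ.2 (Or.inl ⟨z, hz, rfl⟩)
  have hYκ : ∀ z ∈ Y, ‖z‖ ≤ κ := fun z hz => hκ.2 (Or.inr ⟨z, hz, rfl⟩)
  have hL : 0 ≤ L := (norm_nonneg _).trans (hf 1 (by simp [hT])).2
  have hΩ := sum_pow_pos p hT
  have : Nonempty X := hXne.to_subtype
  have : Nonempty Y := hYne.to_subtype
  refine ciSup_sub_ciInf_le fun y' x' => ?_
  have hregret_x := cba_regret_le hκpos hL hXconv hXκ hx (fun t ht => (hf t ht).2) hprojx x' x'.2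
  have hregret_y := cba_regret_le_of_gain hκpos hL hYconv hYκ hy (fun t ht => (hg t ht).2)
    hprojy y' y'.2
  calc _ ≤ (∑ t ∈ Icc 1 T, (t : ℝ) ^ p)⁻¹ * (∑ t ∈ Icc 1 T, (t : ℝ) ^ p * ⟪f t, x t - x'⟫
          + ∑ t ∈ Icc 1 T, (t : ℝ) ^ p * ⟪g t, y' - y t⟫) :=
        gap_weightedAverage_le hFconv hFconc (fun t _ => by positivity) hΩ hx hy
          (fun t ht => (hf t ht).1) (fun t ht => (hg t ht).1) x'.2 y'.2
    _ ≤ (∑ t ∈ Icc 1 T, (t : ℝ) ^ p)⁻¹ *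
          (2 * (2 * κ * L * √(∑ t ∈ Icc 1 T, ((t : ℝ) ^ p) ^ 2))) := by
        gcongr
        linarith
    _ = 4 * κ * L * ((∑ t ∈ Icc 1 T, (t : ℝ) ^ p)⁻¹ * √(∑ t ∈ Icc 1 T, ((t : ℝ) ^ p) ^ 2)) := by
        ring
    _ ≤ 4 * κ * L * (√((p : ℝ) + 1) / √(T : ℝ)) := by
        gcongr
        exact inv_sum_pow_mul_sqrt_sum_pow_sq_le p hT
    _ = 4 * κ * L * √((p : ℝ) + 1) / √(T : ℝ) := by ring

end
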